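/- arXiv:1703.07824 — 3 statements merged into one kernel-verified Lean document; each statement's English description precedes it below -/
import Mathlib

section
/- Let (Δs_i)_{i=1}^{m} be a strictly unimodal positive sequence (strictly increasing up to a unique peak index j, then strictly decreasing), where odd-indexed terms are 'discharge half cycles' w and even-indexed terms are 'charge half cycles' v (or vice versa, alternating). Fix thresholds ĥw > ĥv > 0 and suppose each term satisfies Δs_i ≤ ĥw if it is a discharge half cycle and Δs_i ≤ ĥv if it is a charge half cycle, except that bounds may also come from operational constraints making them smaller. Then: at most one term equals ĥw (namely the peak, if it is a discharge half cycle), at most two terms equal ĥv (the terms adjacent to the peak), and all other terms are strictly less than ĥv. -/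
/-- in a strictly unimodal positive sequence of half-cycle depths
`Δ 0, …, Δ (m-1)` with peak index `j`, where half cycles of parity `p`
(discharge) are bounded by `what` and the others (charge) by `vhat`, with
`what > vhat > 0`: at most one term equals `what` (only the peak, which must then
be a discharge half cycle), at most two terms equal `vhat` (only terms adjacent
to the peak, or the peak itself), and every other term is strictly below `vhat`. -/
theorem stmt4
    (m j p : ℕ) (Δ : ℕ → ℝ) (vhat what : ℝ)
    (hv : 0 < vhat) (hvw : vhat < what)
    (hpos : ∀ i, i < m → 0 < Δ i)
    (hj : j < m)
    (hinc : ∀ i, i < j → Δ i < Δ (i + 1))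
    (hdec : ∀ i, j ≤ i → i + 1 < m → Δ (i + 1) < Δ i)
    (hboundw : ∀ i, i < m → i % 2 = p % 2 → Δ i ≤ what)
    (hboundv : ∀ i, i < m → i % 2 ≠ p % 2 → Δ i ≤ vhat) :
    (∀ i, i < m → Δ i = what → i = j ∧ i % 2 = p % 2) ∧
    (∀ i, i < m → Δ i = vhat → (i + 1 = j ∨ i = j ∨ i = j + 1)) ∧
    (∀ i, i < m → i + 1 ≠ j → i ≠ j → i ≠ j + 1 → Δ i < vhat) := by
  have key : ∀ i, i < m → i + 1 ≠ j → i ≠ j → i ≠ j + 1 → Δ i < vhat := by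
    intro i him h1 h2 h3
    rcases lt_trichotomy i j with hij | hij | hij
    · have hi1 : i + 1 < j := by omega
      by_cases hp : i % 2 = p % 2
      · have ha : Δ i < Δ (i + 1) := hinc i hij
        have hb : Δ (i + 1) ≤ vhat := hboundv (i + 1) (by omega) (by omega)
        linarith
      · have ha : Δ i < Δ (i + 1) := hinc i hij
        have hab : Δ (i + 1) < Δ (i + 1 + 1) := hinc (i + 1) hi1
        have hb : Δ (i + 1 + 1) ≤ vhat := hboundv (i + 1 + 1) (by omega) (by omega)
        linarith
    · exact absurd hij h2
    · have hi2 : j + 2 ≤ i := by omega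
      have e1 : i - 1 + 1 = i := by omega
      have hd1 : Δ i < Δ (i - 1) := by
        have := hdec (i - 1) (by omega) (by omega)
        rwa [e1] at this
      by_cases hp : i % 2 = p % 2
      · have hb : Δ (i - 1) ≤ vhat := hboundv (i - 1) (by omega) (by omega)
        linarith
      · have e2 : i - 2 + 1 = i - 1 := by omega
        have hd2 : Δ (i - 1) < Δ (i - 2) := by
          have := hdec (i - 2) (by omega) (by omega)
          rwa [e2] at this
        have hb : Δ (i - 2) ≤ vhat := hboundv (i - 2) (by omega) (by omega)
        linarith
  refine ⟨?_, ?_, key⟩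
  · intro i him heq
    by_cases hp : i % 2 = p % 2
    · refine ⟨?_, hp⟩
      by_contra hne
      rcases lt_trichotomy i j with hij | hij | hij
      · have ha : Δ i < Δ (i + 1) := hinc i hij
        have hb : Δ (i + 1) ≤ vhat := hboundv (i + 1) (by omega) (by omega)
        linarith
      · exact hne hij
      · have e1 : i - 1 + 1 = i := by omega
        have hd1 : Δ i < Δ (i - 1) := by
          have := hdec (i - 1) (by omega) (by omega)
          rwa [e1] at this
        have hb : Δ (i - 1) ≤ vhat := hboundv (i - 1) (by omega) (by omega)
        linarith
    · have := hboundv i him hp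
      linarith
  · intro i him heq
    by_contra hcon
    push_neg at hcon
    obtain ⟨a, b, c⟩ := hcon
    have := key i him a b c
    linarith
end

section
/- Consider the battery SoC dynamics e_{n+1} = e_n + T·η_c·c_n − (T/η_d)·d_n with e_n ∈ [e_min, e_max], c_n, d_n ≥ 0. Suppose the controller at every step enforces c_n ≤ (1/(T·η_c))·(min{e_max, e_n^min + û·E} − e_n) and d_n ≤ (η_d/T)·(e_n − max{e_min, e_n^max − û·E}), where e_n^max and e_n^min are the running maximum and minimum of e₀, …, e_n (so e₀^max = e₀^min = e₀). Then for all n, e_n ∈ [e_min, e_max], and e_n^max − e_n^min ≤ û·E, i.e., the total SoC range over the whole operation never exceeds û·E. -/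
/-- the threshold-policy SoC invariant. Under the battery dynamics
`e (n+1) = e n + T·η_c·c n − (T/η_d)·d n`, if the controller caps charging by
`c n ≤ (1/(T·η_c))·(min eHi (emin n + uhat·E) − e n)` and discharging by
`d n ≤ (η_d/T)·(e n − max eLo (emax n − uhat·E))`, where `emax`/`emin` are the
running max/min of the SoC starting from `e 0`, then for all `n` the SoC stays in
`[eLo, eHi]` and the total SoC range satisfies `emax n − emin n ≤ uhat·E`. -/
theorem stmt7
    (T ηc ηd E uhat eLo eHi : ℝ)
    (hT : 0 < T) (hηc : 0 < ηc) (hηc1 : ηc ≤ 1) (hηd : 0 < ηd) (hηd1 : ηd ≤ 1)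
    (hE : 0 < E) (huhat : 0 < uhat) (huhat1 : uhat ≤ 1) (hLoHi : eLo ≤ eHi)
    (e c d emax emin : ℕ → ℝ)
    (h0 : eLo ≤ e 0 ∧ e 0 ≤ eHi)
    (hdyn : ∀ n, e (n + 1) = e n + T * ηc * c n - (T / ηd) * d n)
    (hc : ∀ n, 0 ≤ c n) (hd : ∀ n, 0 ≤ d n)
    (hemax0 : emax 0 = e 0) (hemin0 : emin 0 = e 0)
    (hemax : ∀ n, emax (n + 1) = max (emax n) (e (n + 1)))
    (hemin : ∀ n, emin (n + 1) = min (emin n) (e (n + 1)))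
    (hcapc : ∀ n, c n ≤ (1 / (T * ηc)) * (min eHi (emin n + uhat * E) - e n))
    (hcapd : ∀ n, d n ≤ (ηd / T) * (e n - max eLo (emax n - uhat * E))) :
    ∀ n, eLo ≤ e n ∧ e n ≤ eHi ∧ emax n - emin n ≤ uhat * E := by
  have huE : 0 ≤ uhat * E := le_of_lt (mul_pos huhat hE)
  intro n
  induction n with
  | zero =>
    refine ⟨h0.1, h0.2, ?_⟩
    rw [hemax0, hemin0]; simpa using huE
  | succ n ih =>
    obtain ⟨hlo, hhi, hrange⟩ := ih
    have hTc : 0 < T * ηc := mul_pos hT hηc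
    have hTd : 0 < T / ηd := div_pos hT hηd
    -- upper bound: e (n+1) ≤ min eHi (emin n + uhat*E)
    have hup : e (n + 1) ≤ min eHi (emin n + uhat * E) := by
      have h1 : T * ηc * c n ≤ min eHi (emin n + uhat * E) - e n := by
        have := hcapc n
        have h2 : T * ηc * c n ≤ T * ηc * ((1 / (T * ηc)) * (min eHi (emin n + uhat * E) - e n)) :=
          mul_le_mul_of_nonneg_left this hTc.le
        calc T * ηc * c n ≤ _ := h2
          _ = min eHi (emin n + uhat * E) - e n := by field_simp
      have h3 : 0 ≤ (T / ηd) * d n := mul_nonneg hTd.le (hd n)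
      rw [hdyn n]; linarith
    -- lower bound: e (n+1) ≥ max eLo (emax n - uhat*E)
    have hdown : max eLo (emax n - uhat * E) ≤ e (n + 1) := by
      have h1 : (T / ηd) * d n ≤ e n - max eLo (emax n - uhat * E) := by
        have := hcapd n
        have h2 : (T / ηd) * d n ≤ (T / ηd) * ((ηd / T) * (e n - max eLo (emax n - uhat * E))) :=
          mul_le_mul_of_nonneg_left this hTd.le
        calc (T / ηd) * d n ≤ _ := h2
          _ = e n - max eLo (emax n - uhat * E) := by field_simp
      have h3 : 0 ≤ T * ηc * c n := mul_nonneg hTc.le (hc n)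
      rw [hdyn n]; linarith
    have hupHi : e (n + 1) ≤ eHi := le_trans hup (min_le_left _ _)
    have hupmin : e (n + 1) ≤ emin n + uhat * E := le_trans hup (min_le_right _ _)
    have hdownLo : eLo ≤ e (n + 1) := le_trans (le_max_left _ _) hdown
    have hdownmax : emax n - uhat * E ≤ e (n + 1) := le_trans (le_max_right _ _) hdown
    refine ⟨hdownLo, hupHi, ?_⟩
    rw [hemax n, hemin n]
    rcases le_total (emax n) (e (n + 1)) with h | h <;>
      rcases le_total (emin n) (e (n + 1)) with h' | h' <;>
      simp [max_eq_left, max_eq_right, min_eq_left, min_eq_right, h, h'] <;> linarith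
end

section
/- In the rainflow algorithm applied to an alternating sequence of local extrema: at each removal step one deletes two adjacent interior extrema s_i, s_{i+1} satisfying |s_{i−1}−s_i| ≥ |s_i−s_{i+1}| ≤ |s_{i+1}−s_{i+2}|, recording a full cycle of depth |s_i − s_{i+1}|. Then after each removal the remaining sequence is still alternating, and the total variation of the sequence decreases by exactly 2·|s_i − s_{i+1}|. Consequently, if the algorithm extracts full cycles of depths u₁, …, u_k and leaves a residue with total variation V_res, then the total variation of the original sequence equals 2·(u₁+⋯+u_k) + V_res. -/
/-- Total variation of a sequence of local extrema. -/
def totalVar : List ℝ → ℝ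
  | a :: b :: t => |b - a| + totalVar (b :: t)
  | _ => 0

/-- The sequence alternates: consecutive increments have opposite signs. -/
def Alternating : List ℝ → Prop
  | a :: b :: c :: t => (b - a) * (c - b) < 0 ∧ Alternating (b :: c :: t)
  | _ => True

/-- One rainflow removal step: delete two adjacent interior extrema `b, c` with
`|a − b| ≥ |b − c| ≤ |c − d|`, recording a full cycle of depth `|b − c|`. -/
inductive RainflowStep : List ℝ → ℝ → List ℝ → Prop
  | mk (p : List ℝ) (a b c d : ℝ) (t : List ℝ)
      (h₁ : |b - c| ≤ |a - b|) (h₂ : |b - c| ≤ |c - d|) :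
      RainflowStep (p ++ a :: b :: c :: d :: t) |b - c| (p ++ a :: d :: t)

/-- A run of the rainflow algorithm extracting a list of full-cycle depths. -/
inductive RainflowRun : List ℝ → List ℝ → List ℝ → Prop
  | refl (s : List ℝ) : RainflowRun s [] s
  | step {s s' r : List ℝ} {u : ℝ} {us : List ℝ} :
      RainflowStep s u s' → RainflowRun s' us r → RainflowRun s (u :: us) r

lemma alt_tail : ∀ {a : ℝ} {l : List ℝ}, Alternating (a :: l) → Alternating l := by
  intro a l h
  match l with
  | [] => trivial
  | [b] => trivial
  | b :: c :: t => exact h.2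

lemma alt_append_right : ∀ (p : List ℝ) {l : List ℝ}, Alternating (p ++ l) → Alternating l := by
  intro p
  induction p with
  | nil => intro l h; exact h
  | cons x q ih => intro l h; exact ih (alt_tail h)

lemma headI_append₂ (p : List ℝ) (a : ℝ) (l l' : List ℝ) :
    (p ++ a :: l).headI = (p ++ a :: l').headI := by
  cases p <;> simp

lemma totalVar_cons (x : ℝ) (l : List ℝ) (hl : l ≠ []) :
    totalVar (x :: l) = |l.headI - x| + totalVar l := by
  cases l with
  | nil => simp at hl
  | cons y t => simp [totalVar]

lemma alt_cons_cons (x y : ℝ) (l : List ℝ) (hl : l ≠ []) :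
    Alternating (x :: y :: l) ↔ (y - x) * (l.headI - y) < 0 ∧ Alternating (y :: l) := by
  cases l with
  | nil => simp at hl
  | cons z t => simp [Alternating]

lemma key (a b c d : ℝ) (h1 : (b - a) * (c - b) < 0) (h2 : (c - b) * (d - c) < 0)
    (h3 : |b - c| ≤ |a - b|) (h4 : |b - c| ≤ |c - d|) :
    |d - a| + 2 * |b - c| = |b - a| + |c - b| + |d - c| ∧
      (b - a) * (d - a) > 0 ∧ (d - c) * (d - a) > 0 := by
  rcases lt_trichotomy (c - b) 0 with hc | hc | hc
  · have hba : 0 < b - a := by nlinarith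
    have hdc : 0 < d - c := by nlinarith
    have e1 : |b - c| = b - c := abs_of_pos (by linarith)
    have e2 : |a - b| = b - a := by rw [abs_sub_comm]; exact abs_of_pos hba
    have e3 : |c - d| = d - c := by rw [abs_sub_comm]; exact abs_of_pos hdc
    have e4 : |c - b| = b - c := by rw [abs_sub_comm]; exact abs_of_pos (by linarith)
    have e5 : |b - a| = b - a := abs_of_pos hba
    have e6 : |d - c| = d - c := abs_of_pos hdc
    rw [e1] at h3 h4
    have hda : 0 < d - a := by linarith
    have e7 : |d - a| = d - a := abs_of_pos hda
    refine ⟨by rw [e7, e1, e5, e4, e6]; ring_nf, ?_, ?_⟩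
    · exact mul_pos hba hda
    · exact mul_pos hdc hda
  · exfalso; rw [hc] at h1; simp at h1
  · have hba : b - a < 0 := by nlinarith
    have hdc : d - c < 0 := by nlinarith
    have e1 : |b - c| = c - b := by rw [abs_sub_comm]; exact abs_of_pos hc
    have e2 : |a - b| = a - b := abs_of_pos (by linarith)
    have e3 : |c - d| = c - d := abs_of_pos (by linarith)
    have e4 : |c - b| = c - b := abs_of_pos hc
    have e5 : |b - a| = a - b := by rw [abs_sub_comm]; exact abs_of_pos (by linarith)
    have e6 : |d - c| = c - d := by rw [abs_sub_comm]; exact abs_of_pos (by linarith)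
    rw [e1] at h3 h4
    rw [e2] at h3; rw [e3] at h4
    have hda : d - a < 0 := by linarith
    have e7 : |d - a| = a - d := by rw [abs_sub_comm]; exact abs_of_pos (by linarith)
    refine ⟨by rw [e7, e1, e5, e4, e6]; ring_nf, ?_, ?_⟩
    · exact mul_pos_of_neg_of_neg hba hda
    · exact mul_pos_of_neg_of_neg hdc hda

lemma sign_trans {u v w : ℝ} (h1 : u * v > 0) (h2 : u * w < 0) : v * w < 0 := by
  rcases lt_trichotomy u 0 with hu | hu | hu
  · have hv : v < 0 := by nlinarith
    have hw : 0 < w := by nlinarith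
    nlinarith
  · exfalso; rw [hu] at h1; simp at h1
  · have hv : 0 < v := by nlinarith
    have hw : w < 0 := by nlinarith
    nlinarith

lemma base_step (a b c d : ℝ) (t : List ℝ)
    (h1 : |b - c| ≤ |a - b|) (h2 : |b - c| ≤ |c - d|)
    (halt : Alternating (a :: b :: c :: d :: t)) :
    Alternating (a :: d :: t) ∧
      totalVar (a :: d :: t) = totalVar (a :: b :: c :: d :: t) - 2 * |b - c| ∧
      (b - a) * (d - a) > 0 := by
  obtain ⟨hab, hrest⟩ := halt
  obtain ⟨hbc, hrest2⟩ := hrest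
  obtain ⟨hsum, hs1, hs2⟩ := key a b c d hab hbc h1 h2
  refine ⟨?_, ?_, hs1⟩
  · cases t with
    | nil => trivial
    | cons e t' =>
      obtain ⟨hcd, hrest3⟩ := hrest2
      exact ⟨sign_trans hs2 hcd, hrest3⟩
  · simp only [totalVar]; linarith

lemma step_main : ∀ (p : List ℝ) (a b c d : ℝ) (t : List ℝ),
    |b - c| ≤ |a - b| → |b - c| ≤ |c - d| →
    Alternating (p ++ a :: b :: c :: d :: t) →
    Alternating (p ++ a :: d :: t) ∧
      totalVar (p ++ a :: d :: t) = totalVar (p ++ a :: b :: c :: d :: t) - 2 * |b - c| := by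
  intro p
  induction p with
  | nil =>
    intro a b c d t h1 h2 halt
    obtain ⟨x, y, z⟩ := base_step a b c d t h1 h2 halt
    exact ⟨x, y⟩
  | cons x q ih =>
    intro a b c d t h1 h2 halt
    have htail : Alternating (q ++ a :: b :: c :: d :: t) := alt_tail halt
    obtain ⟨ih1, ih2⟩ := ih a b c d t h1 h2 htail
    have hsign : (b - a) * (d - a) > 0 :=
      (base_step a b c d t h1 h2 (alt_append_right q htail)).2.2
    have hne1 : q ++ a :: d :: t ≠ [] := by simp
    have hne2 : q ++ a :: b :: c :: d :: t ≠ [] := by simp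
    constructor
    · cases q with
      | nil =>
        simp only [List.nil_append] at halt ih1 ⊢
        obtain ⟨hax, _⟩ := halt
        have h' : (b - a) * (a - x) < 0 := by rw [mul_comm]; exact hax
        refine ⟨?_, ih1⟩
        rw [mul_comm]
        exact sign_trans hsign h'
      | cons y q' =>
        simp only [List.cons_append] at halt ih1 ⊢
        rw [alt_cons_cons x y _ (by simp)] at halt
        rw [alt_cons_cons x y _ (by simp)]
        obtain ⟨hxy, _⟩ := halt
        rw [headI_append₂ q' a (b :: c :: d :: t) (d :: t)] at hxy
        exact ⟨hxy, ih1⟩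
    · simp only [List.cons_append] at ih2 ⊢
      rw [totalVar_cons x _ hne1, totalVar_cons x _ hne2,
        headI_append₂ q a (d :: t) (b :: c :: d :: t)]
      linarith

/-- each rainflow removal step preserves alternation and decreases
the total variation by exactly twice the recorded cycle depth; consequently the
total variation of the original profile equals twice the sum of extracted
full-cycle depths plus the total variation of the residue. -/
theorem stmt8 :
    (∀ (s s' : List ℝ) (u : ℝ), Alternating s → RainflowStep s u s' →
      Alternating s' ∧ totalVar s' = totalVar s - 2 * u) ∧
    (∀ (s r : List ℝ) (us : List ℝ), Alternating s → RainflowRun s us r →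
      totalVar s = 2 * us.sum + totalVar r) := by
  have hstep : ∀ (s s' : List ℝ) (u : ℝ), Alternating s → RainflowStep s u s' →
      Alternating s' ∧ totalVar s' = totalVar s - 2 * u := by
    intro s s' u halt hs
    cases hs with
    | mk p a b c d t h1 h2 => exact step_main p a b c d t h1 h2 halt
  refine ⟨hstep, ?_⟩
  intro s r us halt hrun
  induction hrun with
  | refl s => simp
  | step h hr ih =>
    rename_i s s' r u us
    obtain ⟨halt', heq⟩ := hstep _ _ _ halt h
    have := ih halt'
    simp only [List.sum_cons]
    linarith
end
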